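/- arXiv:1607.07583 — 2 statements merged into one kernel-verified Lean document; each statement's English description precedes it below -/
import Mathlib

section
/- For all integers N ≥ 1, all nonnegative integers Σ_1, Σ_2, and all positive integers n, a_{3N}(Σ_1, Σ_2; n) = Σ_{k ≥ 1} [ a_{3N−1}(Σ_1, Σ_2; n − 3Nk) + a_{3N−2}(Σ_1, Σ_2; n − 3Nk) ], where terms with n − 3Nk < 0 are zero. -/
/-- The `i`-th largest part (0-indexed) of the weakly decreasing list of parts of a
partition of `n` (entries beyond the number of parts are `0`, which realizes the
padding by zeros). -/
def nthPart {n : ℕ} (P : n.Partition) (i : ℕ) : ℕ :=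
  ((P.parts.sort (· ≤ ·)).reverse).getD i 0

/-- The `j`-th component (`1 ≤ j ≤ m - 1`) of the alternating sum type modulo `m` of a
partition of `n`: `Σ_j = ∑_i (λ_{(i-1)m+j} - λ_{(i-1)m+j+1})` (1-indexed parts, padded
by zeros; summing over `i < n + 1` covers every nonzero term). -/
def altSumType (m : ℕ) {n : ℕ} (P : n.Partition) (j : ℕ) : ℕ :=
  ∑ i ∈ Finset.range (n + 1), (nthPart P (i * m + (j - 1)) - nthPart P (i * m + j))

/-- `aN N s1 s2 n` : the number of partitions of `n` with exactly `N` (positive) parts,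
every part occurring at most twice, and alternating sum type modulo `3` equal to
`(s1, s2)`. -/
noncomputable def aN (N s1 s2 n : ℕ) : ℕ :=
  Nat.card {P : n.Partition // P.parts.card = N ∧ (∀ p, P.parts.count p ≤ 2) ∧
    altSumType 3 P 1 = s1 ∧ altSumType 3 P 2 = s2}

/-!
Adding `k` to every part of a partition `μ` with `3N - r` parts and adjoining `r` parts equal
to `k` (prepending `k` columns of height `3N` to its Young diagram) gives a partition of
`|μ| + 3Nk` with `3N` parts whose smallest part `k` occurs `r` times; conversely every partition
with `3N` parts arises so from its smallest part and that part's multiplicity. For `r ≤ 2` this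
preserves the condition that no part occurs more than twice. It also preserves the alternating
sum type: padding `μ` with zeros to `3N` entries, the decreasing list of the new parts is that
list plus `k` entrywise, and since `3N` entries fill whole blocks of three, every difference
inside a block is unchanged.
-/

namespace Multiset

def addColumns (s : Multiset ℕ) (k r : ℕ) : Multiset ℕ :=
  s.map (· + k) + replicate r k

def removeColumns (s : Multiset ℕ) (k : ℕ) : Multiset ℕ :=
  (s.filter (k < ·)).map (· - k)

variable {s : Multiset ℕ} {k r : ℕ}

@[simp]
lemma card_addColumns : card (s.addColumns k r) = card s + r := by
  simp [addColumns]

lemma sum_addColumns : (s.addColumns k r).sum = s.sum + (card s + r) * k := by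
  simp [addColumns, sum_map_add, add_mul, add_assoc]

lemma le_of_mem_addColumns {x : ℕ} (hx : x ∈ s.addColumns k r) : k ≤ x := by
  rcases mem_add.1 hx with hx | hx
  · obtain ⟨y, -, rfl⟩ := mem_map.1 hx
    omega
  · exact (eq_of_mem_replicate hx).ge

lemma self_mem_addColumns (hr : r ≠ 0) : k ∈ s.addColumns k r :=
  mem_add.2 (Or.inr (mem_replicate.2 ⟨hr, rfl⟩))

lemma count_add_addColumns (p : ℕ) :
    (s.addColumns k r).count (p + k) = s.count p + if p = 0 then r else 0 := by
  rw [addColumns, count_add, count_map_eq_count' _ _ (add_left_injective k), count_replicate]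
  simp

lemma removeColumns_addColumns (hs : 0 ∉ s) : (s.addColumns k r).removeColumns k = s := by
  have hfilter : (s.addColumns k r).filter (k < ·) = s.map (· + k) := by
    rw [addColumns, filter_add, filter_eq_self.2, filter_eq_nil.2, add_zero]
    · intro x hx; simp [eq_of_mem_replicate hx]
    · intro x hx
      obtain ⟨y, hy, rfl⟩ := mem_map.1 hx
      have : y ≠ 0 := fun h => hs (h ▸ hy)
      omega
  rw [removeColumns, hfilter, map_map]
  exact (map_congr rfl fun x _ => by simp).trans (map_id' s)

lemma addColumns_removeColumns (hs : ∀ x ∈ s, k ≤ x) :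
    (s.removeColumns k).addColumns k (s.count k) = s := by
  have hgt : (s.removeColumns k).map (· + k) = s.filter (k < ·) := by
    rw [removeColumns, map_map]
    refine (map_congr rfl fun x hx => ?_).trans (map_id' _)
    have := (mem_filter.1 hx).2
    simp only [Function.comp_apply]; omega
  have heq : replicate (s.count k) k = s.filter (¬ k < ·) := by
    rw [← filter_eq']
    exact filter_congr fun x hx => by have := hs x hx; omega
  rw [addColumns, hgt, heq, filter_add_not]

lemma addColumns_inj {s s' : Multiset ℕ} {k k' r r' : ℕ} (hs : 0 ∉ s) (hs' : 0 ∉ s')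
    (hr : r ≠ 0) (hr' : r' ≠ 0) (h : s.addColumns k r = s'.addColumns k' r') :
    k = k' ∧ r = r' ∧ s = s' := by
  obtain rfl : k = k' := le_antisymm (le_of_mem_addColumns (h ▸ self_mem_addColumns hr'))
    (le_of_mem_addColumns (h ▸ self_mem_addColumns hr))
  have hcount (t : Multiset ℕ) (ht : 0 ∉ t) (q : ℕ) : (t.addColumns k q).count k = q := by
    simpa [count_eq_zero.2 ht] using count_add_addColumns (s := t) (k := k) (r := q) 0
  refine ⟨rfl, ?_, ?_⟩
  · rw [← hcount s hs r, h, hcount s' hs' r']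
  · rw [← removeColumns_addColumns (k := k) (r := r) hs, h, removeColumns_addColumns hs']

end Multiset

namespace Nat.Partition

variable {m n : ℕ}

lemma nthPart_eq_getD (P : n.Partition) {l : List ℕ} (hl : (l : Multiset ℕ) = P.parts)
    (hs : l.Pairwise (· ≥ ·)) (i : ℕ) : nthPart P i = l.getD i 0 := by
  have hsort : P.parts.sort (· ≤ ·) = l.reverse := by
    refine List.Perm.eq_of_pairwise' (Multiset.pairwise_sort _ _) (List.pairwise_reverse.2 hs) ?_
    rw [← Multiset.coe_eq_coe, Multiset.sort_eq, Multiset.coe_reverse, hl]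
  rw [nthPart, hsort, List.reverse_reverse]

lemma zero_notMem_parts (P : n.Partition) : 0 ∉ P.parts :=
  fun h => (P.parts_pos h).ne' rfl

lemma card_parts_le (P : n.Partition) : P.parts.card ≤ n := by
  simpa [P.parts_sum] using Multiset.card_nsmul_le_sum (fun x hx => P.parts_pos hx)

lemma nthPart_eq_zero (P : n.Partition) {i : ℕ} (hi : P.parts.card ≤ i) : nthPart P i = 0 :=
  List.getD_eq_default _ _ (by simpa using hi)

def addColumns (μ : m.Partition) (k r : ℕ) (hk : 0 < k)
    (hn : m + (μ.parts.card + r) * k = n) : n.Partition where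
  parts := μ.parts.addColumns k r
  parts_pos hx := hk.trans_le (Multiset.le_of_mem_addColumns hx)
  parts_sum := by rw [Multiset.sum_addColumns, μ.parts_sum, hn]

def removeColumns (P : n.Partition) (k : ℕ) (hm : (P.parts.removeColumns k).sum = m) :
    m.Partition where
  parts := P.parts.removeColumns k
  parts_pos hx := by
    obtain ⟨y, hy, rfl⟩ := Multiset.mem_map.1 hx
    have := (Multiset.mem_filter.1 hy).2
    omega
  parts_sum := hm

section

variable {μ : m.Partition} {P : n.Partition} {k r : ℕ}

lemma nthPart_of_parts_eq_addColumns (h : P.parts = μ.parts.addColumns k r) (i : ℕ) :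
    nthPart P i = if i < μ.parts.card + r then nthPart μ i + k else 0 := by
  set l := (μ.parts.sort (· ≤ ·)).reverse with hl
  have hlen : l.length = μ.parts.card := by simp [hl]
  have hsorted : (l.map (· + k) ++ List.replicate r k).Pairwise (· ≥ ·) := by
    refine List.pairwise_append.2 ⟨?_, ?_, ?_⟩
    · exact (List.pairwise_reverse.2 (Multiset.pairwise_sort _ _)).map _
        fun a b hab => Nat.add_le_add_right hab k
    · exact List.pairwise_replicate.2 (Or.inr le_rfl)
    · intro a ha b hb
      obtain ⟨x, -, rfl⟩ := List.mem_map.1 ha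
      rw [List.eq_of_mem_replicate hb]
      omega
  have hcoe : ((l.map (· + k) ++ List.replicate r k : List ℕ) : Multiset ℕ) = P.parts := by
    rw [h, Multiset.addColumns, ← Multiset.coe_add, ← Multiset.map_coe, Multiset.coe_reverse,
      Multiset.sort_eq, Multiset.coe_replicate]
  rw [nthPart_eq_getD P hcoe hsorted]
  split_ifs with hi
  · rcases lt_or_ge i μ.parts.card with hμ | hμ
    · rw [List.getD_append _ _ _ _ (by simpa [hlen] using hμ),
        List.getD_eq_getElem _ _ (by simpa [hlen] using hμ), List.getElem_map, nthPart,
        ← hl, List.getD_eq_getElem _ _ (by simpa [hlen] using hμ)]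
    · rw [List.getD_append_right _ _ _ _ (by simpa [hlen] using hμ), nthPart_eq_zero μ hμ,
        List.getD_eq_getElem _ _ (by simp [hlen]; omega)]
      simp
  · exact List.getD_eq_default _ _ (by simp [hlen]; omega)

lemma altSumType_of_parts_eq_addColumns (h : P.parts = μ.parts.addColumns k r) {d j : ℕ}
    (hdvd : d ∣ μ.parts.card + r) (hj : j < d) : altSumType d P j = altSumType d μ j := by
  have hterm (i : ℕ) : nthPart P (i * d + (j - 1)) - nthPart P (i * d + j) =
      nthPart μ (i * d + (j - 1)) - nthPart μ (i * d + j) := by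
    rcases Nat.eq_zero_or_pos j with rfl | hj0
    · simp
    -- both indices lie in one block of `d`, so both are below `card μ + r` or neither is
    have hblock : μ.parts.card + r ≠ i * d + j := fun hc => by
      have hdj : d ∣ j := (Nat.dvd_add_right (Dvd.intro_left i rfl)).1 (hc ▸ hdvd)
      exact hj0.ne' (Nat.eq_zero_of_dvd_of_lt hdj hj)
    rw [nthPart_of_parts_eq_addColumns h, nthPart_of_parts_eq_addColumns h]
    split_ifs with h₁ h₂ h₂
    · omega
    · omega
    · omega
    · rw [nthPart_eq_zero μ (by omega), nthPart_eq_zero μ (by omega)]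
  have hmn : m ≤ n := by
    have := P.parts_sum
    rw [h, Multiset.sum_addColumns, μ.parts_sum] at this
    omega
  rw [altSumType, altSumType, Finset.sum_congr rfl fun i _ => hterm i]
  refine (Finset.sum_subset (Finset.range_subset_range.2 (by omega)) fun i hi hi' => ?_).symm
  have : m < i := by simp at hi'; omega
  have := card_parts_le μ
  rw [nthPart_eq_zero μ (by nlinarith), Nat.zero_sub]

end

end Nat.Partition

def Admissible (N s1 s2 : ℕ) {n : ℕ} (P : n.Partition) : Prop :=
  P.parts.card = N ∧ (∀ p, P.parts.count p ≤ 2) ∧ altSumType 3 P 1 = s1 ∧ altSumType 3 P 2 = s2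

open Finset

open Classical in
lemma aN_eq_card (N s1 s2 n : ℕ) : aN N s1 s2 n = #{P : n.Partition | Admissible N s1 s2 P} := by
  change Nat.card {P : n.Partition // Admissible N s1 s2 P} = _
  rw [Nat.card_eq_fintype_card, Fintype.card_subtype]

section

variable {m n k r : ℕ} {μ : m.Partition} {P : n.Partition}

lemma forall_count_le_two_iff (h : P.parts = μ.parts.addColumns k r) (hr : r ≤ 2) :
    (∀ p, P.parts.count p ≤ 2) ↔ ∀ p, μ.parts.count p ≤ 2 := by
  have hμ0 : μ.parts.count 0 = 0 := Multiset.count_eq_zero.2 μ.zero_notMem_parts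
  refine ⟨fun H p => ?_, fun H p => ?_⟩
  · have := H (p + k)
    rw [h, Multiset.count_add_addColumns] at this
    omega
  · by_cases hp : k ≤ p
    · obtain ⟨q, rfl⟩ : ∃ q, p = q + k := ⟨p - k, by omega⟩
      rw [h, Multiset.count_add_addColumns]
      have := H q
      split_ifs with hq <;> simp_all
    · rw [Multiset.count_eq_zero.2 fun hp' => hp (Multiset.le_of_mem_addColumns (h ▸ hp'))]
      omega

lemma admissible_iff_of_parts_eq_addColumns (h : P.parts = μ.parts.addColumns k r)
    (hr : r ≤ 2) {K M s1 s2 : ℕ} (hM : M + r = 3 * K) :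
    Admissible (3 * K) s1 s2 P ↔ Admissible M s1 s2 μ := by
  rw [Admissible, Admissible, h, Multiset.card_addColumns, ← h, ← hM, Nat.add_right_cancel_iff]
  refine and_congr_right fun hcard => ?_
  have h3' : 3 ∣ μ.parts.card + r := ⟨K, hcard ▸ hM⟩
  rw [forall_count_le_two_iff h hr,
    Nat.Partition.altSumType_of_parts_eq_addColumns h h3' (by norm_num),
    Nat.Partition.altSumType_of_parts_eq_addColumns h h3' (by norm_num)]

end

section

variable {N s1 s2 n : ℕ}

lemma sub_add_card_mul_eq_of_admissible (hN : 0 < N) {k r : ℕ}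
    {μ : (n - 3 * N * k).Partition} (hr : r ≤ 2) (hμ : Admissible (3 * N - r) s1 s2 μ) :
    n - 3 * N * k + (μ.parts.card + r) * k = n := by
  have hcard := hμ.1
  have := μ.card_parts_le
  rw [show μ.parts.card + r = 3 * N by omega]
  omega

lemma exists_parts_eq_addColumns_of_admissible (hN : 0 < N) {P : n.Partition}
    (hP : Admissible (3 * N) s1 s2 P) :
    ∃ k r, (1 ≤ k ∧ k ≤ n) ∧ (r = 1 ∨ r = 2) ∧ ∃ μ : (n - 3 * N * k).Partition,
      Admissible (3 * N - r) s1 s2 μ ∧ P.parts = μ.parts.addColumns k r := by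
  have hne : P.parts ≠ 0 := fun h0 => by simp [Admissible, h0] at hP; omega
  obtain ⟨k, hk, hmin⟩ := Multiset.exists_min_image id hne
  set r := P.parts.count k
  have hdec : P.parts = (P.parts.removeColumns k).addColumns k r :=
    (Multiset.addColumns_removeColumns hmin).symm
  have hr : 0 < r ∧ r ≤ 2 := ⟨Multiset.count_pos.2 hk, hP.2.1 k⟩
  have hcard : (P.parts.removeColumns k).card + r = 3 * N := by
    rw [← hP.1, hdec, Multiset.card_addColumns, ← hdec]
  have hsum : (P.parts.removeColumns k).sum = n - 3 * N * k := by
    have := P.parts_sum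
    rw [hdec, Multiset.sum_addColumns, hcard] at this
    omega
  let μ := P.removeColumns k hsum
  refine ⟨k, r, ⟨P.parts_pos hk, Nat.Partition.le_of_mem_parts hk⟩, by omega, μ, ?_, hdec⟩
  exact (admissible_iff_of_parts_eq_addColumns (μ := μ) hdec hr.2 (by omega)).1 hP

open Classical in
theorem card_admissible_eq_sum (hN : 0 < N) :
    #{P : n.Partition | Admissible (3 * N) s1 s2 P} =
      ∑ x ∈ Icc 1 n ×ˢ {1, 2},
        #{μ : (n - 3 * N * x.1).Partition | Admissible (3 * N - x.2) s1 s2 μ} := by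
  rw [← card_sigma]
  symm
  refine card_bij (fun a ha => a.2.addColumns a.1.1 a.1.2 ?_ ?_) ?_ ?_ ?_
  all_goals simp only [mem_sigma, mem_product, mem_Icc, mem_insert, mem_singleton, mem_filter,
    mem_univ, true_and] at *
  · omega
  · exact sub_add_card_mul_eq_of_admissible hN (by omega) ha.2
  · rintro ⟨⟨k, r⟩, μ⟩ ⟨⟨_, hr⟩, hμ⟩
    exact (admissible_iff_of_parts_eq_addColumns rfl (by omega) (by omega)).2 hμ
  · rintro ⟨⟨k, r⟩, μ⟩ ⟨⟨_, hr⟩, _⟩ ⟨⟨k', r'⟩, μ'⟩ ⟨⟨_, hr'⟩, _⟩ heq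
    dsimp only at heq hr hr'
    obtain ⟨rfl, rfl, hμμ'⟩ := Multiset.addColumns_inj μ.zero_notMem_parts μ'.zero_notMem_parts
      (by omega) (by omega) (congrArg Nat.Partition.parts heq)
    obtain rfl := Nat.Partition.ext hμμ'
    rfl
  · intro P hP
    obtain ⟨k, r, hk, hr, μ, hμ, hP⟩ := exists_parts_eq_addColumns_of_admissible hN hP
    exact ⟨⟨(k, r), μ⟩, ⟨⟨hk, hr⟩, hμ⟩, Nat.Partition.ext hP.symm⟩

end

theorem stmt9_general (N : ℕ) (hN : 1 ≤ N) (s1 s2 n : ℕ) :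
    aN (3 * N) s1 s2 n =
      ∑ k ∈ Finset.Icc 1 n,
        (aN (3 * N - 1) s1 s2 (n - 3 * N * k) + aN (3 * N - 2) s1 s2 (n - 3 * N * k)) := by
  simp only [aN_eq_card]
  rw [card_admissible_eq_sum hN, sum_product]
  exact sum_congr rfl fun k _ => sum_pair (by norm_num)

theorem stmt9 (N : ℕ) (hN : 1 ≤ N) (s1 s2 n : ℕ) (hn : 1 ≤ n) :
    aN (3 * N) s1 s2 n =
      ∑ k ∈ Finset.Icc 1 n,
        (aN (3 * N - 1) s1 s2 (n - 3 * N * k) + aN (3 * N - 2) s1 s2 (n - 3 * N * k)) :=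
  stmt9_general N hN s1 s2 n
end

section
/- For all integers N ≥ 1, all nonnegative integers Σ_1, Σ_2, and all positive integers n, a_{3N+1}(Σ_1, Σ_2; n) = Σ_{k ≥ 1} [ a_{3N}(Σ_1 − k, Σ_2; n − (3N+1)k) + a_{3N−1}(Σ_1 − k, Σ_2; n − (3N+1)k) ], where terms with Σ_1 − k < 0 or n − (3N+1)k < 0 are zero. -/
/-!
Let `k = λ_{3N+1}` be the smallest part. Since parts repeat at most twice, `k` occurs once or
twice, so subtracting `k` from every part and discarding zeros gives a partition of
`n - (3N+1)k` into `3N` or `3N-1` parts whose multiplicities are still at most two; adding `k`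
back to each part and padding with copies of `k` inverts this. Every difference
`λ_i - λ_{i+1}` survives the shift except the last one, `λ_{3N+1} - 0 = k`, which is the first
difference of its block of three: `Σ_1` drops by `k` and `Σ_2` is unchanged.
-/

open Multiset

section NthPart

variable {n : ℕ} (P : n.Partition)

lemma Nat.Partition.card_parts_le_s10 : card P.parts ≤ n := by
  simpa [P.parts_sum] using card_nsmul_le_sum (s := P.parts) (a := 1) fun _ hx ↦ P.parts_pos hx

lemma pairwise_reverse_sort_parts : ((P.parts.sort (· ≤ ·)).reverse).Pairwise (· ≥ ·) :=
  List.pairwise_reverse.2 (pairwise_sort _ _)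

lemma nthPart_eq_zero {i : ℕ} (h : card P.parts ≤ i) : nthPart P i = 0 :=
  List.getD_eq_default _ _ (by simpa using h)

lemma nthPart_mem {i : ℕ} (h : i < card P.parts) : nthPart P i ∈ P.parts := by
  rw [nthPart, List.getD_eq_getElem _ _ (by simpa using h)]
  exact (mem_sort _).1 (List.mem_reverse.1 (List.getElem_mem _))

lemma nthPart_le_of_mem {x : ℕ} (hx : x ∈ P.parts) : nthPart P (card P.parts - 1) ≤ x := by
  set l := (P.parts.sort (· ≤ ·)).reverse
  obtain ⟨i, hi, rfl⟩ := List.getElem_of_mem (l := l) (by simpa [l] using hx)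
  have hlen : l.length = card P.parts := by simp [l]
  rw [nthPart, List.getD_eq_getElem _ _ (by rw [hlen]; omega)]
  rcases (Nat.le_sub_one_of_lt (hlen ▸ hi)).eq_or_lt with h | h
  · simp only [h]; rfl
  · exact List.pairwise_iff_getElem.1 (pairwise_reverse_sort_parts P) _ _ _ _ h

lemma nthPart_eq_getD {L : List ℕ} (hL : L.Pairwise (· ≥ ·)) (hP : (L : Multiset ℕ) = P.parts)
    (i : ℕ) : nthPart P i = L.getD i 0 := by
  rw [nthPart, ← hP, ← coe_reverse, coe_sort,
    List.mergeSort_eq_self _ (List.pairwise_reverse.2 hL), List.reverse_reverse]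

end NthPart

section AltSum

lemma tsub_succ_eq_tsub_tsub_add_ite {f : ℕ → ℕ} {m k : ℕ} (hk : ∀ a < m, k ≤ f a)
    (hz : ∀ a, m ≤ a → f a = 0) (a : ℕ) :
    f a - f (a + 1) = (f a - k) - (f (a + 1) - k) + if a + 1 = m then k else 0 := by
  rcases lt_trichotomy (a + 1) m with h | h | h
  · have := hk a (by omega); have := hk (a + 1) h; rw [if_neg h.ne]; omega
  · have := hk a (by omega); rw [if_pos h, hz (a + 1) h.ge]; omega
  · rw [if_neg h.ne', hz a (by omega), hz (a + 1) h.le, Nat.zero_sub, Nat.zero_sub]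

variable {n : ℕ} (P : n.Partition)

lemma altSumType_eq_sum_range {m j M : ℕ} (hm : 0 < m) (hM : n + 1 ≤ M) :
    altSumType m P j =
      ∑ i ∈ Finset.range M, (nthPart P (i * m + (j - 1)) - nthPart P (i * m + j)) := by
  refine Finset.sum_subset (Finset.range_subset_range.2 hM) fun i _ hi ↦ ?_
  rw [Finset.mem_range, not_lt] at hi
  have := P.card_parts_le_s10
  have := Nat.le_mul_of_pos_right i hm
  rw [nthPart_eq_zero P (by omega), Nat.zero_sub]

lemma altSumType_eq_add_of_nthPart_eq_tsub {n' m j k : ℕ} {Q : n'.Partition} (hn : n' ≤ n)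
    (hm : 0 < m) (hj : 0 < j) (hk : ∀ x ∈ P.parts, k ≤ x)
    (hQ : ∀ i, nthPart Q i = nthPart P i - k) :
    altSumType m P j = altSumType m Q j +
      ∑ i ∈ Finset.range (n + 1), if i * m + j = card P.parts then k else 0 := by
  rw [altSumType_eq_sum_range P hm le_rfl, altSumType_eq_sum_range Q hm (M := n + 1) (by omega),
    ← Finset.sum_add_distrib]
  refine Finset.sum_congr rfl fun i _ ↦ ?_
  have := tsub_succ_eq_tsub_tsub_add_ite (fun a ha ↦ hk _ (nthPart_mem P ha))
    (fun a ha ↦ nthPart_eq_zero P ha) (i * m + (j - 1))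
  rwa [show i * m + (j - 1) + 1 = i * m + j by omega, ← hQ, ← hQ] at this

lemma nthPart_le_altSumType_one {N : ℕ} (hcard : card P.parts = 3 * N + 1) :
    nthPart P (3 * N) ≤ altSumType 3 P 1 := by
  have := P.card_parts_le_s10
  calc nthPart P (3 * N) = nthPart P (N * 3 + (1 - 1)) - nthPart P (N * 3 + 1) := by
        rw [show N * 3 + (1 - 1) = 3 * N by ring, show N * 3 + 1 = 3 * N + 1 by ring,
          nthPart_eq_zero P hcard.le, Nat.sub_zero]
    _ ≤ altSumType 3 P 1 :=
        Finset.single_le_sum (f := fun i ↦ nthPart P (i * 3 + (1 - 1)) - nthPart P (i * 3 + 1))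
          (fun _ _ ↦ Nat.zero_le _) (by simp; omega)

variable {n' N k : ℕ} {Q : n'.Partition} (hn : n' ≤ n) (hcard : card P.parts = 3 * N + 1)
  (hk : ∀ x ∈ P.parts, k ≤ x) (hQ : ∀ i, nthPart Q i = nthPart P i - k)
include hn hcard hk hQ

lemma altSumType_one_eq_add_of_nthPart_eq_tsub : altSumType 3 P 1 = altSumType 3 Q 1 + k := by
  have := P.card_parts_le_s10
  rw [altSumType_eq_add_of_nthPart_eq_tsub P hn three_pos one_pos hk hQ,
    Finset.sum_eq_single_of_mem N (by simp; omega) fun i _ hi ↦ if_neg (by omega), if_pos (by omega)]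

lemma altSumType_two_eq_of_nthPart_eq_tsub : altSumType 3 P 2 = altSumType 3 Q 2 := by
  rw [altSumType_eq_add_of_nthPart_eq_tsub P hn three_pos two_pos hk hQ,
    Finset.sum_eq_zero fun i _ ↦ if_neg (by omega), add_zero]

end AltSum

lemma List.getD_map_add_append_replicate_tsub (l : List ℕ) (k r i : ℕ) :
    (l.map (· + k) ++ List.replicate r k).getD i 0 - k = l.getD i 0 := by
  induction l generalizing i with
  | nil =>
    rcases lt_or_ge i r with h | h
    · rw [List.map_nil, List.nil_append, List.getD_replicate (x := k) h, Nat.sub_self, List.getD_nil]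
    · rw [List.map_nil, List.nil_append, List.getD_eq_default _ _ (by simpa using h), Nat.zero_sub,
        List.getD_nil]
  | cons a l ih =>
    cases i with
    | zero => simp
    | succ i => simpa using ih i

section Shift

variable {n n' k r : ℕ} {P : n.Partition} {Q : n'.Partition}
  (hPQ : P.parts = Q.parts.map (· + k) + replicate r k)
include hPQ

lemma card_parts_eq_of_shift : card P.parts = card Q.parts + r := by
  simp [hPQ]

lemma le_of_mem_of_shift : ∀ x ∈ P.parts, k ≤ x := by
  intro x hx
  rw [hPQ] at hx
  simp only [mem_add, mem_map, mem_replicate] at hx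
  rcases hx with ⟨a, _, rfl⟩ | ⟨_, rfl⟩ <;> omega

lemma eq_add_of_shift : n = n' + (card Q.parts + r) * k := by
  have := congrArg Multiset.sum hPQ
  simp only [P.parts_sum, sum_add, sum_map_add, map_id', Q.parts_sum, map_const', sum_replicate,
    smul_eq_mul] at this
  rw [this]; ring

lemma nthPart_eq_tsub_of_shift (i : ℕ) : nthPart Q i = nthPart P i - k := by
  set l := (Q.parts.sort (· ≤ ·)).reverse
  have hl : l.Pairwise (· ≥ ·) := pairwise_reverse_sort_parts Q
  have hsorted : (l.map (· + k) ++ List.replicate r k).Pairwise (· ≥ ·) := by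
    refine List.pairwise_append.2 ⟨List.pairwise_map.2 (hl.imp fun h ↦ by omega),
      List.pairwise_replicate.2 (Or.inr le_rfl), ?_⟩
    simp only [List.mem_map, List.mem_replicate]
    rintro _ ⟨a, _, rfl⟩ _ ⟨_, rfl⟩
    omega
  have hcoe : ((l.map (· + k) ++ List.replicate r k : List ℕ) : Multiset ℕ) = P.parts := by
    rw [hPQ, ← coe_add, ← map_coe, coe_replicate, coe_reverse, sort_eq]
  rw [nthPart_eq_getD P hsorted hcoe, List.getD_map_add_append_replicate_tsub]
  rfl

lemma count_add_of_shift (q : ℕ) :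
    count (q + k) P.parts = count q Q.parts + if q = 0 then r else 0 := by
  rw [hPQ, count_add, count_map_eq_count' _ _ (add_left_injective k), count_replicate]
  split_ifs <;> omega

lemma count_le_two_iff_of_shift :
    (∀ p, count p P.parts ≤ 2) ↔ (∀ q, count q Q.parts ≤ 2) ∧ r ≤ 2 := by
  have hQ0 : count 0 Q.parts = 0 := count_eq_zero.2 fun h ↦ (Q.parts_pos h).ne' rfl
  constructor
  · intro h
    refine ⟨fun q ↦ ?_, ?_⟩
    · have := h (q + k)
      rw [count_add_of_shift hPQ] at this
      omega
    · have := h (0 + k)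
      rwa [count_add_of_shift hPQ, hQ0, if_pos rfl, zero_add] at this
  · rintro ⟨hQ, hr⟩ p
    rcases le_or_gt k p with hp | hp
    · obtain ⟨q, rfl⟩ := Nat.exists_eq_add_of_le' hp
      rw [count_add_of_shift hPQ]
      have := hQ q
      split_ifs with hq
      · subst hq; omega
      · omega
    · rw [count_eq_zero.2 fun h ↦ (le_of_mem_of_shift hPQ p h).not_gt hp]
      omega

lemma nthPart_card_sub_one_eq_iff_of_shift (hP : 0 < card P.parts) :
    nthPart P (card P.parts - 1) = k ↔ 0 < r := by
  have hmem := nthPart_mem P (Nat.sub_one_lt_of_lt hP)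
  constructor
  · intro h
    by_contra hr
    generalize nthPart P (card P.parts - 1) = x at h hmem
    rw [hPQ, Nat.eq_zero_of_not_pos hr, replicate_zero, add_zero, mem_map] at hmem
    obtain ⟨q, hq, hqk⟩ := hmem
    have := Q.parts_pos hq
    omega
  · intro hr
    have hk : k ∈ P.parts := by rw [hPQ]; exact mem_add.2 (Or.inr (mem_replicate.2 ⟨hr.ne', rfl⟩))
    exact (nthPart_le_of_mem P hk).antisymm (le_of_mem_of_shift hPQ _ hmem)

end Shift

namespace Multiset

lemma sum_map_tsub_add_card_mul {s : Multiset ℕ} {k : ℕ} (h : ∀ x ∈ s, k ≤ x) :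
    (s.map (· - k)).sum + card s * k = s.sum := by
  conv_rhs => rw [← map_id' s, ← map_congr rfl fun x hx ↦ Nat.sub_add_cancel (h x hx)]
  rw [sum_map_add, map_const', sum_replicate, smul_eq_mul]

lemma map_add_filter_map_tsub_add_replicate {s : Multiset ℕ} {k : ℕ} (h : ∀ x ∈ s, k ≤ x) :
    ((s.map (· - k)).filter (· ≠ 0)).map (· + k) + replicate (count k s) k = s := by
  have hfilter : (s.map (· - k)).filter (· ≠ 0) = (s.filter (· ≠ k)).map (· - k) := by
    rw [filter_map]
    congr 1
    exact filter_congr fun x hx ↦ by have := h x hx; simp only [Function.comp_apply]; omega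
  rw [hfilter, map_map, ← filter_eq', map_congr rfl fun x hx ↦ ?_, map_id']
  · simpa only [ne_eq, not_not] using filter_add_not (· ≠ k) s
  have := h x (mem_of_mem_filter hx)
  have := of_mem_filter hx
  simp only [Function.comp_apply]
  omega

lemma filter_map_tsub_map_add_add_replicate {t : Multiset ℕ} (ht : ∀ x ∈ t, 0 < x) (k r : ℕ) :
    ((t.map (· + k) + replicate r k).map (· - k)).filter (· ≠ 0) = t := by
  simp only [map_add, map_map, Function.comp_def, Nat.add_sub_cancel, map_id', map_replicate,
    Nat.sub_self, filter_add]
  rw [filter_eq_self.2 fun x hx ↦ (ht x hx).ne', filter_eq_nil.2 fun x hx ↦ by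
    simp [eq_of_mem_replicate hx], add_zero]

end Multiset

def Nat.Partition.shiftEquiv (m k n : ℕ) (hk : 0 < k) :
    {P : (n + m * k).Partition // card P.parts = m ∧ ∀ x ∈ P.parts, k ≤ x} ≃
      {Q : n.Partition // card Q.parts ≤ m} where
  toFun P := ⟨.ofSums n (P.1.parts.map (· - k)) (by
      have := sum_map_tsub_add_card_mul P.2.2
      rw [P.1.parts_sum, P.2.1] at this
      omega), by
      have := congrArg card (map_add_filter_map_tsub_add_replicate P.2.2)
      rw [card_add, card_map, P.2.1] at this
      simp only [ofSums_parts]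
      omega⟩
  invFun Q := ⟨⟨Q.1.parts.map (· + k) + replicate (m - card Q.1.parts) k,
      fun hx ↦ by
        rcases mem_add.1 hx with hx | hx
        · obtain ⟨q, -, rfl⟩ := mem_map.1 hx; omega
        · rw [eq_of_mem_replicate hx]; exact hk,
      by
        rw [sum_add, sum_map_add, map_id', Q.1.parts_sum, map_const', sum_replicate, sum_replicate,
          smul_eq_mul, smul_eq_mul, add_assoc, ← add_mul, Nat.add_sub_cancel' Q.2]⟩,
    by simp [Q.2], le_of_mem_of_shift rfl⟩
  left_inv P := by
    refine Subtype.ext (Nat.Partition.ext ?_)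
    have hP := map_add_filter_map_tsub_add_replicate P.2.2
    have := congrArg card hP
    rw [card_add, card_map, card_replicate, P.2.1] at this
    simp only [ofSums_parts]
    rwa [show m - card ((P.1.parts.map (· - k)).filter (· ≠ 0)) = P.1.parts.count k by omega]
  right_inv Q := Subtype.ext (Nat.Partition.ext
    (filter_map_tsub_map_add_add_replicate (fun _ hx ↦ Q.1.parts_pos hx) k _))

lemma Nat.Partition.card_subtype_eq_of_shift {m k n : ℕ} (hk : 0 < k)
    {R : (n + m * k).Partition → Prop} {R' : n.Partition → Prop}
    (hR : ∀ P, R P → card P.parts = m ∧ ∀ x ∈ P.parts, k ≤ x)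
    (hR' : ∀ Q, R' Q → card Q.parts ≤ m)
    (h : ∀ P Q, card Q.parts ≤ m →
      P.parts = Q.parts.map (· + k) + replicate (m - card Q.parts) k → (R P ↔ R' Q)) :
    Nat.card {P // R P} = Nat.card {Q // R' Q} := by
  let e := Nat.Partition.shiftEquiv m k n hk
  refine Nat.card_congr <| (Equiv.subtypeSubtypeEquivSubtype (hR _)).symm.trans <|
    (e.subtypeEquiv fun P ↦ h _ _ (e P).2 ?_).trans (Equiv.subtypeSubtypeEquivSubtype (hR' _))
  exact congrArg (fun P ↦ P.1.parts) (e.symm_apply_apply P).symm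

lemma Nat.card_subtype_or_and {α : Type*} [Finite α] {p q r : α → Prop} (h : ∀ a, p a → ¬ q a) :
    Nat.card {a // (p a ∨ q a) ∧ r a} = Nat.card {a // p a ∧ r a} + Nat.card {a // q a ∧ r a} := by
  classical
  rw [← Nat.card_sum]
  exact Nat.card_congr <| (Equiv.subtypeEquivRight fun a ↦ or_and_right).trans <|
    subtypeOrEquiv _ _ fun f hp hq a hfa ↦ h a (hp a hfa).1 (hq a hfa).1

lemma Nat.card_subtype_eq_sum_card_fiberwise {α β : Type*} [Finite α] [DecidableEq β]
    {p : α → Prop} {g : α → β} {t : Finset β} (h : ∀ a, p a → g a ∈ t) :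
    Nat.card {a // p a} = ∑ b ∈ t, Nat.card {a // p a ∧ g a = b} := by
  classical
  have := Fintype.ofFinite α
  simp only [Nat.card_eq_fintype_card, Fintype.card_subtype]
  rw [Finset.card_eq_sum_card_fiberwise (f := g) fun a ha ↦ h a (by simpa using ha)]
  simp [Finset.filter_filter]

lemma aN_eq_zero_of_lt {M s1 s2 n : ℕ} (h : n < M) : aN M s1 s2 n = 0 :=
  Nat.card_eq_zero.2 <| .inl ⟨fun P ↦ by have := P.1.card_parts_le_s10; have := P.2.1; omega⟩

lemma fiber_iff_of_shift {n n' N k r s1 s2 : ℕ} {P : n.Partition} {Q : n'.Partition}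
    (hPQ : P.parts = Q.parts.map (· + k) + replicate r k) (hcard : card Q.parts + r = 3 * N + 1)
    (hks : k ≤ s1) :
    ((card P.parts = 3 * N + 1 ∧ (∀ p, count p P.parts ≤ 2) ∧
        altSumType 3 P 1 = s1 ∧ altSumType 3 P 2 = s2) ∧ nthPart P (3 * N) = k) ↔
      ((card Q.parts = 3 * N ∨ card Q.parts = 3 * N - 1) ∧ (∀ p, count p Q.parts ≤ 2) ∧
        altSumType 3 Q 1 = s1 - k ∧ altSumType 3 Q 2 = s2) := by
  have hP : card P.parts = 3 * N + 1 := (card_parts_eq_of_shift hPQ).trans hcard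
  have hn : n' ≤ n := by rw [eq_add_of_shift hPQ]; omega
  have hk := le_of_mem_of_shift hPQ
  have hQ := nthPart_eq_tsub_of_shift hPQ
  rw [show 3 * N = card P.parts - 1 by omega, nthPart_card_sub_one_eq_iff_of_shift hPQ (by omega),
    count_le_two_iff_of_shift hPQ, altSumType_one_eq_add_of_nthPart_eq_tsub P hn hP hk hQ,
    altSumType_two_eq_of_nthPart_eq_tsub P hn hP hk hQ]
  constructor
  · rintro ⟨⟨-, ⟨hQ2, hr⟩, h1, h2⟩, hr0⟩
    exact ⟨by omega, hQ2, by omega, h2⟩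
  · rintro ⟨hQc, hQ2, h1, h2⟩
    exact ⟨⟨by omega, ⟨hQ2, by omega⟩, by omega, h2⟩, by omega⟩

lemma card_fiber_eq {n N k s1 s2 : ℕ} (hN : 1 ≤ N) (hk : 0 < k) (hks : k ≤ s1) :
    Nat.card {P : n.Partition // (card P.parts = 3 * N + 1 ∧ (∀ p, count p P.parts ≤ 2) ∧
        altSumType 3 P 1 = s1 ∧ altSumType 3 P 2 = s2) ∧ nthPart P (3 * N) = k} =
      aN (3 * N) (s1 - k) s2 (n - (3 * N + 1) * k) +
        aN (3 * N - 1) (s1 - k) s2 (n - (3 * N + 1) * k) := by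
  have hmin : ∀ P : n.Partition, card P.parts = 3 * N + 1 → nthPart P (3 * N) = k →
      ∀ x ∈ P.parts, k ≤ x := fun P hP hPk x hx ↦
    hPk ▸ (show 3 * N = card P.parts - 1 by omega) ▸ nthPart_le_of_mem P hx
  rcases le_or_gt ((3 * N + 1) * k) n with h | h
  · obtain ⟨n', rfl⟩ := Nat.exists_eq_add_of_le' h
    rw [Nat.add_sub_cancel]
    refine (Nat.Partition.card_subtype_eq_of_shift hk (fun P hP ↦ ⟨hP.1.1, hmin P hP.1.1 hP.2⟩)
      (fun Q hQ ↦ by omega) fun P Q hQ hPQ ↦ fiber_iff_of_shift hPQ (by omega) hks).trans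
      (Nat.card_subtype_or_and fun Q h h' ↦ by omega)
  · -- `n - (3 * N + 1) * k` truncates to `0`, and `3 * N - 1 ≥ 2` as `N ≥ 1`.
    rw [aN_eq_zero_of_lt (by omega), aN_eq_zero_of_lt (by omega)]
    refine Nat.card_eq_zero.2 (.inl ⟨fun P ↦ ?_⟩)
    obtain ⟨⟨hP, -⟩, hPk⟩ := P.2
    have := card_nsmul_le_sum (hmin P.1 hP hPk)
    rw [P.1.parts_sum, hP, smul_eq_mul] at this
    omega

theorem stmt10_general (N : ℕ) (hN : 1 ≤ N) (s1 s2 n : ℕ) :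
    aN (3 * N + 1) s1 s2 n =
      ∑ k ∈ (Finset.Icc 1 n).filter (fun k => k ≤ s1),
        (aN (3 * N) (s1 - k) s2 (n - (3 * N + 1) * k) +
          aN (3 * N - 1) (s1 - k) s2 (n - (3 * N + 1) * k)) := by
  rw [aN, Nat.card_subtype_eq_sum_card_fiberwise (g := fun P ↦ nthPart P (3 * N))]
  · refine Finset.sum_congr rfl fun k hk ↦ ?_
    simp only [Finset.mem_filter, Finset.mem_Icc] at hk
    exact card_fiber_eq hN hk.1.1 hk.2
  · rintro P ⟨hP, -, h1, -⟩
    have hmem := nthPart_mem P (show 3 * N < card P.parts by omega)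
    have := nthPart_le_altSumType_one P hP
    simp only [Finset.mem_filter, Finset.mem_Icc]
    exact ⟨⟨P.parts_pos hmem, P.le_of_mem_parts hmem⟩, h1 ▸ this⟩

theorem stmt10 (N : ℕ) (hN : 1 ≤ N) (s1 s2 n : ℕ) (hn : 1 ≤ n) :
    aN (3 * N + 1) s1 s2 n =
      ∑ k ∈ (Finset.Icc 1 n).filter (fun k => k ≤ s1),
        (aN (3 * N) (s1 - k) s2 (n - (3 * N + 1) * k) +
          aN (3 * N - 1) (s1 - k) s2 (n - (3 * N + 1) * k)) :=
  stmt10_general N hN s1 s2 n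
end
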